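/- Define T : ℝ × ℝ → ℝ × ℝ by T(θ, φ) = (Real.sqrt (1 − Real.cos θ), Real.sqrt (1 − Real.cos θ) · (4·φ/π − 1)), and let S = (0, π) × (0, π/2) ⊆ ℝ × ℝ. Then T is injective on S, and for every function f : ℝ × ℝ → ℝ, the change-of-variables formula holds with respect to 2-dimensional Lebesgue measure: ∫_{T '' S} f(x, y) d(x,y) = ∫_S ((2/π) · Real.sin θ) · f (T (θ, φ)) d(θ,φ). -/

import Mathlib

open Real MeasureTheory Set

/-!
`T` is the map `(θ, φ) ↦ (r θ, r θ * g φ)` with `r θ = √(1 - cos θ)` and `g` affine. Its Jacobian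
matrix is lower triangular, with determinant `r' θ * r θ * g' = (r²)' θ / 2 * g' = sin θ / 2 * 4 / π`.
On `S`, `r` is injective and nonvanishing and `g` is injective, so `T` is injective there, and the
theorem is the change of variables formula for injective differentiable maps.
-/

section RadialShear

variable {r g : ℝ → ℝ}

def radialShear (r g : ℝ → ℝ) (p : ℝ × ℝ) : ℝ × ℝ := (r p.1, r p.1 * g p.2)

theorem injOn_radialShear {A B : Set ℝ} (hr : InjOn r A) (hr₀ : ∀ x ∈ A, r x ≠ 0)
    (hg : InjOn g B) : InjOn (radialShear r g) (A ×ˢ B) := by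
  rintro ⟨x₁, y₁⟩ ⟨hx₁, hy₁⟩ ⟨x₂, y₂⟩ ⟨hx₂, hy₂⟩ h
  simp only [radialShear, Prod.mk.injEq] at h
  obtain ⟨hr_eq, hrg_eq⟩ := h
  have hx : x₁ = x₂ := hr hx₁ hx₂ hr_eq
  subst hx
  exact Prod.ext rfl (hg hy₁ hy₂ (mul_left_cancel₀ (hr₀ x₁ hx₁) hrg_eq))

noncomputable def radialShearFDeriv (r g r' g' : ℝ → ℝ) (p : ℝ × ℝ) : ℝ × ℝ →L[ℝ] ℝ × ℝ :=
  LinearMap.toContinuousLinearMap <|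
    Matrix.toLin (Module.Basis.finTwoProd ℝ) (Module.Basis.finTwoProd ℝ)
      !![r' p.1, 0; r' p.1 * g p.2, r p.1 * g' p.2]

theorem hasFDerivAt_radialShear {r' g' : ℝ → ℝ} {p : ℝ × ℝ}
    (hr : HasDerivAt r (r' p.1) p.1) (hg : HasDerivAt g (g' p.2) p.2) :
    HasFDerivAt (radialShear r g) (radialShearFDeriv r g r' g' p) p := by
  have hr₁ := hr.comp_hasFDerivAt p (hasFDerivAt_fst (𝕜 := ℝ) (E := ℝ) (F := ℝ))
  have hg₂ := hg.comp_hasFDerivAt p (hasFDerivAt_snd (𝕜 := ℝ) (E := ℝ) (F := ℝ))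
  refine (hr₁.prodMk (hr₁.mul hg₂)).congr_fderiv ?_
  refine ContinuousLinearMap.ext fun v ↦ Prod.ext ?_ ?_
  · simp [radialShearFDeriv, Matrix.toLin_finTwoProd_apply]
  · simp [radialShearFDeriv, Matrix.toLin_finTwoProd_apply]
    ring

theorem det_radialShearFDeriv (r' g' : ℝ → ℝ) (p : ℝ × ℝ) :
    (radialShearFDeriv r g r' g' p).det = r' p.1 * (r p.1 * g' p.2) := by
  simp only [radialShearFDeriv, LinearMap.det_toContinuousLinearMap, LinearMap.det_toLin,
    Matrix.det_fin_two_of]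
  ring

end RadialShear

theorem one_sub_cos_pos {θ : ℝ} (hθ : θ ∈ Ioo 0 π) : 0 < 1 - cos θ := by
  have := strictAntiOn_cos (left_mem_Icc.2 pi_pos.le) (Ioo_subset_Icc_self hθ) hθ.1
  rw [cos_zero] at this
  linarith

theorem injOn_sqrt_one_sub_cos : InjOn (fun θ ↦ √(1 - cos θ)) (Icc 0 π) := by
  intro θ₁ h₁ θ₂ h₂ h
  have := (sqrt_inj (sub_nonneg.2 (cos_le_one θ₁)) (sub_nonneg.2 (cos_le_one θ₂))).1 h
  exact injOn_cos h₁ h₂ (by linarith)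

theorem hasDerivAt_sqrt_one_sub_cos {θ : ℝ} (hθ : cos θ ≠ 1) :
    HasDerivAt (fun θ ↦ √(1 - cos θ)) (sin θ / (2 * √(1 - cos θ))) θ := by
  have h : HasDerivAt (fun θ ↦ 1 - cos θ) (sin θ) θ := by
    simpa using (hasDerivAt_cos θ).const_sub 1
  exact h.sqrt (sub_ne_zero.2 hθ.symm)

/-- Change of variables for the paper's warping function 𝒯⁻¹ (Appendix D): T is
injective on S = (0,π) × (0,π/2) and carries the measure (2/π)·sin θ dθ dφ on S
to Lebesgue measure on T '' S. -/
theorem warping_change_of_variables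
    (T : ℝ × ℝ → ℝ × ℝ)
    (hT : ∀ θ φ : ℝ, T (θ, φ) =
      (Real.sqrt (1 - Real.cos θ),
        Real.sqrt (1 - Real.cos θ) * (4 * φ / π - 1)))
    (S : Set (ℝ × ℝ)) (hS : S = Set.Ioo (0 : ℝ) π ×ˢ Set.Ioo (0 : ℝ) (π / 2)) :
    Set.InjOn T S ∧
    ∀ f : ℝ × ℝ → ℝ,
      (∫ q in T '' S, f q) = ∫ q in S, ((2 / π) * Real.sin q.1) * f (T q) := by
  set r : ℝ → ℝ := fun θ ↦ √(1 - cos θ)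
  set g : ℝ → ℝ := fun φ ↦ 4 * φ / π - 1
  have hTrg : T = radialShear r g := funext fun p ↦ hT p.1 p.2
  have hr_pos : ∀ θ ∈ Ioo 0 π, 0 < r θ := fun θ hθ ↦ sqrt_pos.2 (one_sub_cos_pos hθ)
  have hinj : InjOn T S := by
    rw [hTrg, hS]
    refine injOn_radialShear (injOn_sqrt_one_sub_cos.mono Ioo_subset_Icc_self)
      (fun θ hθ ↦ (hr_pos θ hθ).ne') (fun φ₁ _ φ₂ _ h ↦ ?_)
    simpa [g, pi_ne_zero] using h
  refine ⟨hinj, fun f ↦ ?_⟩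
  set r' : ℝ → ℝ := fun θ ↦ sin θ / (2 * r θ)
  have hderiv : ∀ p ∈ S, HasFDerivWithinAt T (radialShearFDeriv r g r' (fun _ ↦ 4 / π) p) S p := by
    intro p hp
    rw [hS] at hp
    rw [hTrg]
    refine (hasFDerivAt_radialShear (hasDerivAt_sqrt_one_sub_cos ?_) ?_).hasFDerivWithinAt
    · linarith [one_sub_cos_pos hp.1]
    · simpa [g, mul_div_right_comm] using ((hasDerivAt_id p.2).const_mul (4 / π)).sub_const 1
  have hS_meas : MeasurableSet S := hS ▸ measurableSet_Ioo.prod measurableSet_Ioo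
  rw [integral_image_eq_integral_abs_det_fderiv_smul volume hS_meas hderiv hinj f]
  refine setIntegral_congr_fun hS_meas fun p hp ↦ ?_
  rw [hS] at hp
  have hr := (hr_pos p.1 hp.1).ne'
  have hsin := sin_pos_of_pos_of_lt_pi hp.1.1 hp.1.2
  have hdet : (radialShearFDeriv r g r' (fun _ ↦ 4 / π) p).det = 2 / π * sin p.1 := by
    rw [det_radialShearFDeriv]
    simp only [r']
    field_simp
    ring
  rw [hdet, abs_of_pos (by positivity), smul_eq_mul]
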